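/- (Eigenvalue locations / rigidity; Theorem 7.5.) Suppose δ_- ≥ c for some constant c > 0, and that ‖H‖ ≤ 2 + O_≺(X) and sup_{E ∈ ℝ}|𝔫_N(E) − n(E)| = O_≺(Y) hold for some deterministic control parameters X, Y ≤ C. Define α̂ := min(α, N+1−α) and fix ε > 0. Then |λ_α − γ_α| ≺ Y (N/α̂)^{1/3} uniformly over all α with α̂ ≥ M^ε N Y, and |λ_α − γ_α| ≺ X + (M^ε Y)^{2/3} uniformly over all α with α̂ ≤ M^ε N Y. -/

import Mathlib

open MeasureTheory ProbabilityTheory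

noncomputable section

/-- The Stieltjes transform of Wigner's semicircle law,
`m(z) = (2π)⁻¹ ∫_{-2}^{2} √(4-x²)/(x-z) dx`. -/
def msc (z : ℂ) : ℂ :=
  (2 * Real.pi : ℂ)⁻¹ * ∫ x in (-2:ℝ)..(2:ℝ), (Real.sqrt (4 - x ^ 2) : ℂ) / ((x : ℂ) - z)

/-- `κ_E := ||E| - 2|`, the distance of the energy `E` to the spectral edges `±2`. -/
def kappaE (Ee : ℝ) : ℝ := |(|Ee| - 2)|

/-- The sup norm of a vector. -/
def supNorm {N : ℕ} (v : Fin N → ℂ) : ℝ := ⨆ i, ‖v i‖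

/-- The `ℓ∞ → ℓ∞` operator norm of a matrix: `max_i ∑_j |A i j|`. -/
def linftyNorm {N : ℕ} (A : Matrix (Fin N) (Fin N) ℂ) : ℝ := ⨆ i, ∑ j, ‖A i j‖

/-- A real matrix viewed as a complex matrix. -/
def sToC {N : ℕ} (S : Matrix (Fin N) (Fin N) ℝ) : Matrix (Fin N) (Fin N) ℂ :=
  S.map (fun x : ℝ => (x : ℂ))

/-- `Γ(z) := ‖(1 - m(z)² S)⁻¹‖_{ℓ∞→ℓ∞}`. -/
def Gamma {N : ℕ} (S : Matrix (Fin N) (Fin N) ℝ) (z : ℂ) : ℝ :=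
  linftyNorm (1 - msc z ^ 2 • sToC S)⁻¹

/-- `Γ̃(z)`: the `ℓ∞→ℓ∞` norm of `(1 - m(z)² S)⁻¹` restricted to the orthogonal complement
of the constant vector `e` (vectors whose entries sum to zero). -/
def GammaTilde {N : ℕ} (S : Matrix (Fin N) (Fin N) ℝ) (z : ℂ) : ℝ :=
  sSup { r : ℝ | ∃ v : Fin N → ℂ, (∑ i, v i) = 0 ∧ supNorm v ≤ 1 ∧
    r = supNorm (Matrix.mulVec (1 - msc z ^ 2 • sToC S)⁻¹ v) }

/-- A sequence (indexed by `N`) of random `N×N` complex matrices. -/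
structure MatrixEnsemble where
  Ω : ℕ → Type
  ms : ∀ N, MeasurableSpace (Ω N)
  P : ∀ N, @Measure (Ω N) (ms N)
  isProb : ∀ N, IsProbabilityMeasure (P N)
  H : ∀ N, Ω N → Matrix (Fin N) (Fin N) ℂ

instance (E : MatrixEnsemble) (N : ℕ) : MeasurableSpace (E.Ω N) := E.ms N

/-- The variances `s_ij := E |h_ij|²`. -/
def vVar (E : MatrixEnsemble) (N : ℕ) (i j : Fin N) : ℝ :=
  ∫ ω, ‖E.H N ω i j‖ ^ 2 ∂(E.P N)

/-- The matrix of variances `S = (s_ij)`. -/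
def sMat (E : MatrixEnsemble) (N : ℕ) : Matrix (Fin N) (Fin N) ℝ :=
  Matrix.of fun i j => vVar E N i j

/-- `M := (max_{i,j} s_ij)⁻¹`. -/
def Mpar (E : MatrixEnsemble) (N : ℕ) : ℝ := (⨆ i : Fin N, ⨆ j : Fin N, vVar E N i j)⁻¹

/-- The assumptions of the paper: a Hermitian random matrix whose upper-triangular entries are
independent and centred, with real diagonal, doubly stochastic variance matrix `S`,
`N^δ ≤ M ≤ N`, and uniformly bounded moments of the normalized entries
(`E|ζ_ij|^p ≤ μ_p`, i.e. `E|h_ij|^p ≤ μ_p s_ij^{p/2}`). -/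
structure IsWignerType (E : MatrixEnsemble) (δ : ℝ) (μmom : ℕ → ℝ) : Prop where
  measurable : ∀ N (i j : Fin N), Measurable fun ω => E.H N ω i j
  hermitian : ∀ N ω, (E.H N ω).IsHermitian
  indep : ∀ N, iIndepFun
    (fun (p : {q : Fin N × Fin N // q.1 ≤ q.2}) (ω : E.Ω N) => E.H N ω p.1.1 p.1.2) (E.P N)
  centered : ∀ N (i j : Fin N), ∫ ω, E.H N ω i j ∂(E.P N) = 0
  diagReal : ∀ N (i : Fin N) ω, (E.H N ω i i).im = 0
  stochastic : ∀ N (i : Fin N), ∑ j, vVar E N i j = 1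
  δ_pos : 0 < δ
  M_lower : ∀ N : ℕ, (N : ℝ) ^ δ ≤ Mpar E N
  M_upper : ∀ N : ℕ, Mpar E N ≤ (N : ℝ)
  moments : ∀ (p : ℕ) N (i j : Fin N),
    ∫ ω, ‖E.H N ω i j‖ ^ p ∂(E.P N) ≤ μmom p * vVar E N i j ^ ((p : ℝ) / 2)

/-- The resolvent `G(z) = (H - z)⁻¹`. -/
def resG (E : MatrixEnsemble) (N : ℕ) (z : ℂ) (ω : E.Ω N) : Matrix (Fin N) (Fin N) ℂ :=
  (E.H N ω - z • (1 : Matrix (Fin N) (Fin N) ℂ))⁻¹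

/-- `m_N(z) = N⁻¹ Tr G(z)`. -/
def mN (E : MatrixEnsemble) (N : ℕ) (z : ℂ) (ω : E.Ω N) : ℂ :=
  (N : ℂ)⁻¹ * Matrix.trace (resG E N z ω)

/-- The control parameter `Π(z) = √(Im m(z)/(Mη)) + 1/(Mη)`. -/
def PiCtrl (E : MatrixEnsemble) (N : ℕ) (z : ℂ) : ℝ :=
  Real.sqrt ((msc z).im / (Mpar E N * z.im)) + 1 / (Mpar E N * z.im)

/-- `Λ_o = max_{i≠j} |G_ij|`. -/
def LambdaO (E : MatrixEnsemble) (N : ℕ) (z : ℂ) (ω : E.Ω N) : ℝ :=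
  ⨆ i, ⨆ j, if i ≠ j then ‖resG E N z ω i j‖ else 0

/-- `Λ_d = max_i |G_ii - m|`. -/
def LambdaD (E : MatrixEnsemble) (N : ℕ) (z : ℂ) (ω : E.Ω N) : ℝ :=
  ⨆ i, ‖resG E N z ω i i - msc z‖

/-- `Λ = max (Λ_o, Λ_d)`. -/
def Lambda (E : MatrixEnsemble) (N : ℕ) (z : ℂ) (ω : E.Ω N) : ℝ :=
  max (LambdaO E N z ω) (LambdaD E N z ω)

/-- `Θ = |m_N - m|`. -/
def Theta (E : MatrixEnsemble) (N : ℕ) (z : ℂ) (ω : E.Ω N) : ℝ :=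
  ‖mN E N z ω - msc z‖

/-- Stochastic domination `X ≺ Y`, uniformly over the parameter sets `T N`:
for every `ε, D > 0` there is `N₀` such that for all `N ≥ N₀` and all parameters `u ∈ T N`,
`P[X > N^ε Y] ≤ N^{-D}`. -/
def StochDom {Ω : ℕ → Type} [∀ N, MeasurableSpace (Ω N)] (P : ∀ N, Measure (Ω N))
    {U : ℕ → Type} (T : ∀ N, Set (U N)) (X Y : ∀ N, U N → Ω N → ℝ) : Prop :=
  ∀ ε > (0:ℝ), ∀ D > (0:ℝ), ∃ N₀ : ℕ, ∀ N, N₀ ≤ N → ∀ u ∈ T N,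
    P N { ω | (N : ℝ) ^ ε * Y N u ω < X N u ω } ≤ ENNReal.ofReal ((N : ℝ) ^ (-D))

/-- `η̃_E`, the lower edge of the spectral domain `S̃` (defined via `Γ̃`). -/
def etaTilde (E : MatrixEnsemble) (γ : ℝ) (N : ℕ) (Ee : ℝ) : ℝ :=
  sInf { η : ℝ | 0 < η ∧ ∀ η' ∈ Set.Icc η (10:ℝ),
    1 / (Mpar E N * η') ≤
      min (Mpar E N ^ (-γ) / GammaTilde (sMat E N) (Ee + η' * Complex.I) ^ 3)
        (Mpar E N ^ (-2*γ) /
          (GammaTilde (sMat E N) (Ee + η' * Complex.I) ^ 4 * (msc (Ee + η' * Complex.I)).im)) }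

/-- The spectral domain `S̃`. -/
def domSTilde (E : MatrixEnsemble) (γ : ℝ) (N : ℕ) : Set ℂ :=
  { z | |z.re| ≤ 10 ∧ etaTilde E γ N z.re ≤ z.im ∧ z.im ≤ 10 }

/-- `η_E`, the lower edge of the spectral domain `S` (defined via `Γ`). -/
def etaS (E : MatrixEnsemble) (γ : ℝ) (N : ℕ) (Ee : ℝ) : ℝ :=
  sInf { η : ℝ | 0 < η ∧ ∀ η' ∈ Set.Icc η (10:ℝ),
    1 / (Mpar E N * η') ≤
      min (Mpar E N ^ (-γ) / Gamma (sMat E N) (Ee + η' * Complex.I) ^ 3)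
        (Mpar E N ^ (-2*γ) /
          (Gamma (sMat E N) (Ee + η' * Complex.I) ^ 4 * (msc (Ee + η' * Complex.I)).im)) }

/-- The spectral domain `S`. -/
def domS (E : MatrixEnsemble) (γ : ℝ) (N : ℕ) : Set ℂ :=
  { z | |z.re| ≤ 10 ∧ etaS E γ N z.re ≤ z.im ∧ z.im ≤ 10 }


/-- The minor `H^(T)`: the matrix with the rows and columns in `T` set to zero. -/
def minorMat {N : ℕ} (T : Finset (Fin N)) (A : Matrix (Fin N) (Fin N) ℂ) :
    Matrix (Fin N) (Fin N) ℂ :=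
  Matrix.of fun i j => if i ∈ T ∨ j ∈ T then 0 else A i j

/-- The resolvent `G^(T)(z) = (H^(T) - z)⁻¹` of a minor. -/
def minorResG (E : MatrixEnsemble) (N : ℕ) (T : Finset (Fin N)) (z : ℂ) (ω : E.Ω N) :
    Matrix (Fin N) (Fin N) ℂ :=
  (minorMat T (E.H N ω) - z • (1 : Matrix (Fin N) (Fin N) ℂ))⁻¹

/-- The σ-algebra generated by the minor `H^(k)`. -/
def minorSigma (E : MatrixEnsemble) (N : ℕ) (k : Fin N) : MeasurableSpace (E.Ω N) :=
  MeasurableSpace.comap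
    (fun ω => (fun i j => minorMat {k} (E.H N ω) i j : Fin N → Fin N → ℂ)) inferInstance

/-- The partial expectation `P_k X := E (X | H^(k))`. -/
def Pexp (E : MatrixEnsemble) (N : ℕ) (k : Fin N) (X : E.Ω N → ℂ) : E.Ω N → ℂ :=
  (E.P N)[X | minorSigma E N k]

/-- `Q_k X := X - P_k X`. -/
def Qexp (E : MatrixEnsemble) (N : ℕ) (k : Fin N) (X : E.Ω N → ℂ) : E.Ω N → ℂ :=
  fun ω => X ω - Pexp E N k X ω

/-- `Z_i := Q_i ∑_{k,l ≠ i} h_ik G^(i)_kl h_li`. -/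
def Zi (E : MatrixEnsemble) (N : ℕ) (i : Fin N) (z : ℂ) (ω : E.Ω N) : ℂ :=
  Qexp E N i (fun ω' => ∑ k ∈ Finset.univ.erase i, ∑ l ∈ Finset.univ.erase i,
    E.H N ω' i k * minorResG E N {i} z ω' k l * E.H N ω' l i) ω

/-- `A_i := ∑_k s_ik G_ik G_ki / G_ii`. -/
def Ai (E : MatrixEnsemble) (N : ℕ) (i : Fin N) (z : ℂ) (ω : E.Ω N) : ℂ :=
  ∑ k, (vVar E N i k : ℂ) * resG E N z ω i k * resG E N z ω k i / resG E N z ω i i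

/-- `Υ_i := A_i + h_ii - Z_i`. -/
def Upsi (E : MatrixEnsemble) (N : ℕ) (i : Fin N) (z : ℂ) (ω : E.Ω N) : ℂ :=
  Ai E N i z ω + E.H N ω i i - Zi E N i z ω

/-- `δ_-`: the largest `d` with `S ≥ -1 + d` (as a quadratic form), i.e. the distance
from `-1` to the spectrum of the symmetric doubly stochastic matrix `S`. -/
def deltaMinus {N : ℕ} (S : Matrix (Fin N) (Fin N) ℝ) : ℝ :=
  sSup { d : ℝ | ∀ v : Fin N → ℝ,
    (-1 + d) * ∑ i, v i ^ 2 ≤ ∑ i, v i * S.mulVec v i }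

/-- `δ_+`: the largest `d` with `S|_{e⊥} ≤ 1 - d`, i.e. the distance from `1` to the
spectrum of `S` restricted to the orthogonal complement of the constant vector. -/
def deltaPlus {N : ℕ} (S : Matrix (Fin N) (Fin N) ℝ) : ℝ :=
  sSup { d : ℝ | ∀ v : Fin N → ℝ, (∑ i, v i) = 0 →
    ∑ i, v i * S.mulVec v i ≤ (1 - d) * ∑ i, v i ^ 2 }

/-- The semicircle density `ϱ(x) = (2π)⁻¹ √((4 - x²)₊)`. -/
def rhoSc (x : ℝ) : ℝ := (2 * Real.pi)⁻¹ * Real.sqrt (max (4 - x ^ 2) 0)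

/-- The distribution function `n(E) = ∫_{-∞}^E ϱ(x) dx` of the semicircle law. -/
def nSc (Ee : ℝ) : ℝ := ∫ x in Set.Iic Ee, rhoSc x

/-- The operator norm of a Hermitian matrix: the largest absolute value of an eigenvalue. -/
def hermOpNorm {N : ℕ} {A : Matrix (Fin N) (Fin N) ℂ} (hA : A.IsHermitian) : ℝ :=
  ⨆ i, |hA.eigenvalues i|

/-- The empirical eigenvalue counting function `𝔫_N(E) = N⁻¹ #{α : λ_α ≤ E}`. -/
def countFn {N : ℕ} {A : Matrix (Fin N) (Fin N) ℂ} (hA : A.IsHermitian) (Ee : ℝ) : ℝ :=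
  (N : ℝ)⁻¹ * (Finset.univ.filter fun i => hA.eigenvalues i ≤ Ee).card

/-- The eigenvalues of a Hermitian matrix, sorted in nondecreasing order. -/
def sortedEigs {N : ℕ} {A : Matrix (Fin N) (Fin N) ℂ} (hA : A.IsHermitian) : Fin N → ℝ :=
  hA.eigenvalues ∘ Tuple.sort hA.eigenvalues

/-- The classical location `γ_α` of the `α`-th eigenvalue: `n(γ_α) = α/N`. -/
def gammaLoc (N : ℕ) (α : ℕ) : ℝ := sInf { x : ℝ | (α : ℝ) / (N : ℝ) ≤ nSc x }

/-! On the event where `sup_E |𝔫_N(E) - n(E)| ≤ Z := N^β Y` and `‖H‖ ≤ 2 + W := 2 + N^β X`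
everything is deterministic. Counting eigenvalues gives `|n(λ_α) - n(γ_α)| ≤ Z + 1/N`, and the
case `α = 1` forces `Z ≥ 1/(2N)`. The semicircle density is comparable to `√(x + 2)` near the
lower edge, so `n(-2 + κ) ≍ κ^{3/2}`. In the bulk regime `n(γ_α) ≍ α̂/N ≫ Z`, both `λ_α` and `γ_α`
lie at distance `≳ (α̂/N)^{2/3}` from the edge, where the density is `≳ (α̂/N)^{1/3}`; inverting `n`
costs the factor `(N/α̂)^{1/3}`. In the edge regime both `n`-values are `O(α̂/N + Z)`, so both points
lie within `O((α̂/N + Z)^{2/3})` of `-2`, up to the excess `W` of the norm. The upper half of the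
spectrum is the mirror image under `n(-E) = 1 - n(E)`. The factors `N^β` are absorbed into `N^ε`
and `M^ε ≥ N^{εδ}`. -/

section Semicircle

open Set Real

lemma rhoSc_nonneg (x : ℝ) : 0 ≤ rhoSc x := by
  unfold rhoSc
  positivity

lemma rhoSc_eq_zero_of_four_le_sq {x : ℝ} (hx : 4 ≤ x ^ 2) : rhoSc x = 0 := by
  rw [rhoSc, max_eq_right (by linarith), Real.sqrt_zero, mul_zero]

lemma rhoSc_eq_zero_of_le {x : ℝ} (hx : x ≤ -2) : rhoSc x = 0 :=
  rhoSc_eq_zero_of_four_le_sq (by nlinarith)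

lemma rhoSc_eq_zero_of_ge {x : ℝ} (hx : 2 ≤ x) : rhoSc x = 0 :=
  rhoSc_eq_zero_of_four_le_sq (by nlinarith)

lemma rhoSc_neg (x : ℝ) : rhoSc (-x) = rhoSc x := by
  rw [rhoSc, rhoSc, neg_sq]

lemma continuous_rhoSc : Continuous rhoSc :=
  continuous_const.mul (((continuous_const.sub (continuous_pow 2)).max continuous_const).sqrt)

lemma integrable_rhoSc : Integrable rhoSc := by
  refine continuous_rhoSc.integrable_of_hasCompactSupport
    (HasCompactSupport.intro (K := Icc (-2) 2) isCompact_Icc fun x hx =>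
      rhoSc_eq_zero_of_four_le_sq ?_)
  simp only [mem_Icc, not_and_or, not_le] at hx
  rcases hx with h | h <;> nlinarith

lemma sqrt_add_two_div_two_pi_le_rhoSc {x : ℝ} (h₁ : -2 ≤ x) (h₂ : x ≤ 1) :
    (2 * π)⁻¹ * √(x + 2) ≤ rhoSc x := by
  refine mul_le_mul_of_nonneg_left (Real.sqrt_le_sqrt (le_max_of_le_left ?_)) (by positivity)
  nlinarith

lemma rhoSc_le_sqrt_add_two_div_pi {x : ℝ} (hx : -2 ≤ x) : rhoSc x ≤ π⁻¹ * √(x + 2) := by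
  have key : √(max (4 - x ^ 2) 0) ≤ 2 * √(x + 2) := by
    rw [show 2 * √(x + 2) = √(4 * (x + 2)) by
      rw [Real.sqrt_mul (by norm_num), show (4:ℝ) = 2 ^ 2 by norm_num,
        Real.sqrt_sq (by norm_num)]]
    exact Real.sqrt_le_sqrt (max_le (by nlinarith) (by nlinarith))
  calc rhoSc x ≤ (2 * π)⁻¹ * (2 * √(x + 2)) := mul_le_mul_of_nonneg_left key (by positivity)
    _ = π⁻¹ * √(x + 2) := by field_simp

lemma nSc_sub (a b : ℝ) : nSc b - nSc a = ∫ x in a..b, rhoSc x :=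
  intervalIntegral.integral_Iic_sub_Iic integrable_rhoSc.integrableOn integrable_rhoSc.integrableOn

lemma nSc_nonneg (E : ℝ) : 0 ≤ nSc E :=
  setIntegral_nonneg measurableSet_Iic fun x _ => rhoSc_nonneg x

lemma nSc_mono : Monotone nSc := fun a b hab => by
  have := intervalIntegral.integral_nonneg (μ := volume) hab fun x _ => rhoSc_nonneg x
  linarith [nSc_sub a b]

lemma continuous_nSc : Continuous nSc := by
  have h := (intervalIntegral.continuous_primitive
    (fun a b => integrable_rhoSc.intervalIntegrable (a := a) (b := b)) 0).const_add (nSc 0)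
  convert h using 1
  funext b
  linarith [nSc_sub 0 b]

lemma nSc_eq_zero_of_le {E : ℝ} (hE : E ≤ -2) : nSc E = 0 := by
  rw [nSc, setIntegral_congr_fun measurableSet_Iic
    (fun x hx => rhoSc_eq_zero_of_le (le_trans hx hE) : EqOn rhoSc 0 (Iic E))]
  simp

lemma nSc_neg_two_add (κ : ℝ) : nSc (-2 + κ) = ∫ x in (-2:ℝ)..(-2 + κ), rhoSc x := by
  linarith [nSc_sub (-2) (-2 + κ), nSc_eq_zero_of_le (le_refl (-2 : ℝ))]

lemma nSc_two : nSc 2 = 1 := by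
  rw [show (2:ℝ) = -2 + 4 by norm_num, nSc_neg_two_add, show (-2:ℝ) + 4 = 2 by norm_num]
  have hcong : EqOn rhoSc (fun x => (2 * π)⁻¹ * (2 * √(1 - (x / 2) ^ 2))) (uIcc (-2) 2) := by
    intro x hx
    rw [uIcc_of_le (by norm_num)] at hx
    rw [rhoSc, max_eq_left (by nlinarith [hx.1, hx.2]),
      show (4:ℝ) - x ^ 2 = 2 ^ 2 * (1 - (x / 2) ^ 2) by ring,
      Real.sqrt_mul (by norm_num), Real.sqrt_sq (by norm_num)]
  rw [intervalIntegral.integral_congr hcong, intervalIntegral.integral_const_mul,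
    intervalIntegral.integral_comp_div (fun u => 2 * √(1 - u ^ 2)) (two_ne_zero),
    intervalIntegral.integral_const_mul]
  norm_num [integral_sqrt_one_sub_sq]
  field_simp

lemma integral_rhoSc : ∫ x, rhoSc x = 1 := by
  have hzero : ∫ x in Ioi (2:ℝ), rhoSc x = 0 := by
    rw [setIntegral_congr_fun measurableSet_Ioi
      (fun x hx => rhoSc_eq_zero_of_ge (le_of_lt hx) : EqOn rhoSc 0 (Ioi 2))]
    simp
  rw [← intervalIntegral.integral_Iic_add_Ioi (b := 2) integrable_rhoSc.integrableOn
    integrable_rhoSc.integrableOn, hzero, add_zero]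
  exact nSc_two

lemma nSc_neg (E : ℝ) : nSc (-E) = 1 - nSc E := by
  have hreflect : nSc E = ∫ x in Ioi (-E), rhoSc x := by
    rw [← integral_comp_neg_Iic]
    simp only [rhoSc_neg]
    rfl
  rw [hreflect, ← integral_rhoSc, ← intervalIntegral.integral_Iic_add_Ioi (b := -E)
    integrable_rhoSc.integrableOn integrable_rhoSc.integrableOn, nSc]
  ring

lemma nSc_le_one (E : ℝ) : nSc E ≤ 1 := by
  have h := nSc_neg (-E)
  rw [neg_neg] at h
  linarith [nSc_nonneg (-E)]

lemma integral_sqrt_add_two (κ : ℝ) :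
    ∫ x in (-2:ℝ)..(-2 + κ), √(x + 2) = 2 / 3 * κ ^ ((3:ℝ) / 2) := by
  rw [intervalIntegral.integral_comp_add_right (fun x => √x) 2,
    show (-2:ℝ) + 2 = 0 by ring, show (-2:ℝ) + κ + 2 = κ by ring,
    intervalIntegral.integral_congr (g := fun x => x ^ ((1:ℝ) / 2))
      (fun x _ => Real.sqrt_eq_rpow x),
    integral_rpow (Or.inl (by norm_num)), Real.zero_rpow (by norm_num)]
  norm_num
  ring

lemma nSc_neg_two_add_le {κ : ℝ} (hκ : 0 ≤ κ) :
    nSc (-2 + κ) ≤ 2 / (3 * π) * κ ^ ((3:ℝ) / 2) := by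
  rw [nSc_neg_two_add]
  calc ∫ x in (-2:ℝ)..(-2 + κ), rhoSc x
      ≤ ∫ x in (-2:ℝ)..(-2 + κ), π⁻¹ * √(x + 2) := by
        refine intervalIntegral.integral_mono_on (by linarith)
          integrable_rhoSc.intervalIntegrable ?_ fun x hx => rhoSc_le_sqrt_add_two_div_pi hx.1
        exact (continuous_const.mul (continuous_id.add continuous_const).sqrt).intervalIntegrable
          _ _
    _ = 2 / (3 * π) * κ ^ ((3:ℝ) / 2) := by
        rw [intervalIntegral.integral_const_mul, integral_sqrt_add_two κ]
        field_simp

lemma le_nSc_neg_two_add {κ : ℝ} (hκ : 0 ≤ κ) (hκ3 : κ ≤ 3) :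
    1 / (3 * π) * κ ^ ((3:ℝ) / 2) ≤ nSc (-2 + κ) := by
  rw [nSc_neg_two_add]
  calc 1 / (3 * π) * κ ^ ((3:ℝ) / 2)
      = ∫ x in (-2:ℝ)..(-2 + κ), (2 * π)⁻¹ * √(x + 2) := by
        rw [intervalIntegral.integral_const_mul, integral_sqrt_add_two κ]
        field_simp
    _ ≤ ∫ x in (-2:ℝ)..(-2 + κ), rhoSc x := by
        refine intervalIntegral.integral_mono_on (by linarith) ?_
          integrable_rhoSc.intervalIntegrable
          fun x hx => sqrt_add_two_div_two_pi_le_rhoSc hx.1 (by linarith [hx.2])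
        exact (continuous_const.mul (continuous_id.add continuous_const).sqrt).intervalIntegrable
          _ _

lemma sqrt_add_two_mul_sub_le_nSc_sub {E E' : ℝ} (h₁ : -2 ≤ E) (h₂ : E ≤ E') (h₃ : E' ≤ 1) :
    (2 * π)⁻¹ * √(E + 2) * (E' - E) ≤ nSc E' - nSc E := by
  rw [nSc_sub]
  calc (2 * π)⁻¹ * √(E + 2) * (E' - E) = ∫ _ in E..E', (2 * π)⁻¹ * √(E + 2) := by
        rw [intervalIntegral.integral_const, smul_eq_mul]
        ring
    _ ≤ ∫ x in E..E', rhoSc x := by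
        refine intervalIntegral.integral_mono_on h₂ intervalIntegrable_const
          integrable_rhoSc.intervalIntegrable fun x hx => ?_
        calc (2 * π)⁻¹ * √(E + 2) ≤ (2 * π)⁻¹ * √(x + 2) :=
              mul_le_mul_of_nonneg_left (Real.sqrt_le_sqrt (by linarith [hx.1])) (by positivity)
          _ ≤ rhoSc x := sqrt_add_two_div_two_pi_le_rhoSc (by linarith [hx.1]) (by linarith [hx.2])

lemma nSc_one_ge : 0.551 ≤ nSc 1 := by
  have h := le_nSc_neg_two_add (κ := 3) (by norm_num) (by norm_num)
  rw [show (-2:ℝ) + 3 = 1 by norm_num, show (3:ℝ) / 2 = 1 + 1 / 2 by norm_num,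
    Real.rpow_add (by norm_num), Real.rpow_one, ← Real.sqrt_eq_rpow] at h
  have hs : (1.732:ℝ) ≤ √3 := (Real.le_sqrt (by norm_num) (by norm_num)).mpr (by norm_num)
  have hπ := Real.pi_lt_d4
  have : (0.551:ℝ) ≤ 1 / (3 * π) * (3 * √3) := by
    rw [div_mul_eq_mul_div, le_div_iff₀ (by positivity)]
    nlinarith
  linarith

end Semicircle

section Inversion

open Set Real

lemma neg_two_lt_of_nSc_pos {x : ℝ} (h : 0 < nSc x) : -2 < x := by
  by_contra! hx
  linarith [nSc_eq_zero_of_le hx]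

lemma lt_one_of_nSc_lt {x : ℝ} (h : nSc x < 0.551) : x < 1 := by
  by_contra! hx
  linarith [nSc_mono hx, nSc_one_ge]

lemma rpow_three_halves_rpow_two_thirds {x : ℝ} (hx : 0 ≤ x) :
    (x ^ ((3:ℝ) / 2)) ^ ((2:ℝ) / 3) = x := by
  rw [← Real.rpow_mul hx]
  norm_num

lemma le_neg_two_add_rpow_of_nSc_le {x P : ℝ} (hP : 0 ≤ P) (hP54 : P ≤ 0.54)
    (hx : nSc x ≤ P) : x ≤ -2 + (3 * π * P) ^ ((2:ℝ) / 3) := by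
  have h3P : 0 ≤ 3 * π * P := by positivity
  rcases lt_or_ge x (-2) with hx2 | hx2
  · linarith [Real.rpow_nonneg h3P ((2:ℝ) / 3)]
  have hx1 : x < 1 := lt_one_of_nSc_lt (by linarith)
  have hlow := le_nSc_neg_two_add (κ := x + 2) (by linarith) (by linarith)
  rw [show -2 + (x + 2) = x by ring] at hlow
  have hκ : (x + 2) ^ ((3:ℝ) / 2) ≤ 3 * π * P := by
    rw [one_div, inv_mul_le_iff₀ (by positivity)] at hlow
    nlinarith [Real.pi_pos]
  have := Real.rpow_le_rpow (Real.rpow_nonneg (by linarith) _) hκ (by norm_num : (0:ℝ) ≤ 2 / 3)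
  rw [rpow_three_halves_rpow_two_thirds (by linarith)] at this
  linarith

lemma rpow_le_add_two_of_le_nSc {x v : ℝ} (hv : 0 ≤ v) (hx : -2 ≤ x) (hvx : v ≤ nSc x) :
    (3 * π / 2 * v) ^ ((2:ℝ) / 3) ≤ x + 2 := by
  have hup := nSc_neg_two_add_le (κ := x + 2) (by linarith)
  rw [show -2 + (x + 2) = x by ring] at hup
  have h : 3 * π / 2 * v ≤ (x + 2) ^ ((3:ℝ) / 2) := by
    rw [div_mul_eq_mul_div, le_div_iff₀ (by positivity)] at hup
    nlinarith [Real.pi_pos]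
  calc (3 * π / 2 * v) ^ ((2:ℝ) / 3) ≤ ((x + 2) ^ ((3:ℝ) / 2)) ^ ((2:ℝ) / 3) :=
        Real.rpow_le_rpow (by positivity) h (by norm_num)
    _ = x + 2 := rpow_three_halves_rpow_two_thirds (by linarith)

lemma rpow_one_third_le_sqrt_add_two {a x : ℝ} (ha : 0 ≤ a) (hx : -2 ≤ x)
    (h : 0.95 * a ≤ nSc x) : a ^ ((1:ℝ) / 3) ≤ √(x + 2) := by
  have hκ := rpow_le_add_two_of_le_nSc (by positivity) hx h
  have ha23 : a ^ ((2:ℝ) / 3) ≤ x + 2 :=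
    (Real.rpow_le_rpow ha (by nlinarith [Real.pi_gt_three]) (by norm_num)).trans hκ
  calc a ^ ((1:ℝ) / 3) = √(a ^ ((2:ℝ) / 3)) := by
        rw [Real.sqrt_eq_rpow, ← Real.rpow_mul ha]
        norm_num
    _ ≤ √(x + 2) := Real.sqrt_le_sqrt ha23

lemma rpow_one_third_mul_sub_le_nSc_sub {a x y : ℝ} (ha : 0 ≤ a) (hx : -2 ≤ x) (hxy : x ≤ y)
    (hy : y ≤ 1) (hxa : 0.95 * a ≤ nSc x) :
    a ^ ((1:ℝ) / 3) * (y - x) ≤ 2 * π * (nSc y - nSc x) := by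
  have h := sqrt_add_two_mul_sub_le_nSc_sub hx hxy hy
  rw [mul_assoc, inv_mul_le_iff₀ (by positivity)] at h
  exact (mul_le_mul_of_nonneg_right (rpow_one_third_le_sqrt_add_two ha hx hxa)
    (by linarith)).trans h

lemma abs_sub_mul_rpow_le_of_nSc_eq {a B x y : ℝ} (ha : 0 < a) (ha2 : a ≤ 1 / 2)
    (hBa : 20 * B ≤ a) (hy : nSc y = a) (hxy : |nSc x - nSc y| ≤ B) :
    |x - y| * a ^ ((1:ℝ) / 3) ≤ 7 * B := by
  rw [abs_le] at hxy
  have hB : 0 ≤ B := by linarith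
  have hinside : ∀ t, |nSc t - a| ≤ B → -2 ≤ t ∧ t ≤ 1 ∧ 0.95 * a ≤ nSc t := fun t ht => by
    rw [abs_le] at ht
    exact ⟨(neg_two_lt_of_nSc_pos (by linarith)).le, (lt_one_of_nSc_lt (by linarith)).le,
      by linarith⟩
  obtain ⟨hx2, hx1, hxa⟩ := hinside x (abs_le.mpr ⟨by linarith, by linarith⟩)
  obtain ⟨hy2, hy1, hya⟩ := hinside y (by rw [hy, sub_self, abs_zero]; exact hB)
  have h2π : 2 * π * B ≤ 7 * B := by nlinarith [Real.pi_lt_d2]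
  rcases le_total x y with hle | hle
  · have := rpow_one_third_mul_sub_le_nSc_sub ha.le hx2 hle hy1 hxa
    rw [abs_of_nonpos (by linarith)]
    nlinarith [Real.pi_pos]
  · have := rpow_one_third_mul_sub_le_nSc_sub ha.le hy2 hle hx1 hya
    rw [abs_of_nonneg (by linarith)]
    nlinarith [Real.pi_pos]

lemma abs_sub_mul_min_nSc_rpow_le {B x y : ℝ} (hy : 0 < min (nSc y) (1 - nSc y))
    (hBa : 20 * B ≤ min (nSc y) (1 - nSc y)) (hxy : |nSc x - nSc y| ≤ B) :
    |x - y| * min (nSc y) (1 - nSc y) ^ ((1:ℝ) / 3) ≤ 7 * B := by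
  rcases le_total (nSc y) (1 - nSc y) with h | h
  · rw [min_eq_left h] at hy hBa ⊢
    exact abs_sub_mul_rpow_le_of_nSc_eq hy (by linarith) hBa rfl hxy
  · rw [min_eq_right h] at hy hBa ⊢
    have := abs_sub_mul_rpow_le_of_nSc_eq (x := -x) hy (by linarith) hBa (nSc_neg y)
      (by rwa [nSc_neg, nSc_neg, show 1 - nSc x - (1 - nSc y) = -(nSc x - nSc y) by ring,
        abs_neg])
    rwa [show -x - -y = -(x - y) by ring, abs_neg] at this

lemma three_mul_pi_rpow_le_five : (3 * π) ^ ((2:ℝ) / 3) ≤ 5 := by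
  have hs : (2.2:ℝ) ≤ √5 := (Real.le_sqrt (by norm_num) (by norm_num)).mpr (by norm_num)
  have h5 : 3 * π ≤ (5:ℝ) ^ ((3:ℝ) / 2) := by
    rw [show (3:ℝ) / 2 = 1 + 1 / 2 by norm_num, Real.rpow_add (by norm_num), Real.rpow_one,
      ← Real.sqrt_eq_rpow]
    nlinarith [Real.pi_lt_d4]
  calc (3 * π) ^ ((2:ℝ) / 3) ≤ ((5:ℝ) ^ ((3:ℝ) / 2)) ^ ((2:ℝ) / 3) :=
        Real.rpow_le_rpow (by positivity) h5 (by norm_num)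
    _ = 5 := rpow_three_halves_rpow_two_thirds (by norm_num)

lemma abs_sub_le_of_nSc_le {P W x y : ℝ} (hP : 0 ≤ P) (hP54 : P ≤ 0.54) (hW : 0 ≤ W)
    (hx : -2 - W ≤ x) (hy : -2 ≤ y) (hnx : nSc x ≤ P) (hny : nSc y ≤ P) :
    |x - y| ≤ W + 5 * P ^ ((2:ℝ) / 3) := by
  have hcoeff : (3 * π * P) ^ ((2:ℝ) / 3) ≤ 5 * P ^ ((2:ℝ) / 3) := by
    rw [Real.mul_rpow (by positivity) hP]
    exact mul_le_mul_of_nonneg_right three_mul_pi_rpow_le_five (Real.rpow_nonneg hP _)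
  have hx' := le_neg_two_add_rpow_of_nSc_le hP hP54 hnx
  have hy' := le_neg_two_add_rpow_of_nSc_le hP hP54 hny
  rw [abs_le]
  constructor <;> linarith [Real.rpow_nonneg hP ((2:ℝ) / 3)]

lemma abs_sub_le_of_min_nSc_add_abs_le {P W x y : ℝ} (hW : 0 ≤ W) (hx : |x| ≤ 2 + W)
    (hy : y ∈ Icc (-2) 2) (hP : min (nSc y) (1 - nSc y) + |nSc x - nSc y| ≤ P) :
    |x - y| ≤ W + 8 * P ^ ((2:ℝ) / 3) := by
  rw [abs_le] at hx
  have hP0 : 0 ≤ P :=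
    (add_nonneg (le_min (nSc_nonneg y) (by linarith [nSc_le_one y])) (abs_nonneg _)).trans hP
  rcases le_or_gt P 0.54 with hP54 | hP54
  · have h58 : 5 * P ^ ((2:ℝ) / 3) ≤ 8 * P ^ ((2:ℝ) / 3) := by
      linarith [Real.rpow_nonneg hP0 ((2:ℝ) / 3)]
    have habs := abs_nonneg (nSc x - nSc y)
    rcases le_total (nSc y) (1 - nSc y) with h | h
    · rw [min_eq_left h] at hP
      refine (abs_sub_le_of_nSc_le hP0 hP54 hW (by linarith) hy.1 ?_ (by linarith)).trans
        (by linarith)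
      linarith [le_abs_self (nSc x - nSc y)]
    · rw [min_eq_right h] at hP
      have := abs_sub_le_of_nSc_le (x := -x) (y := -y) hP0 hP54 hW (by linarith)
        (by linarith [hy.2])
        (by rw [nSc_neg]; linarith [neg_abs_le (nSc x - nSc y)]) (by rw [nSc_neg]; linarith)
      rw [show -x - -y = -(x - y) by ring, abs_neg] at this
      linarith
  · -- here the crude bound `|x - y| ≤ 4 + W` is already good enough
    have h8 : (4:ℝ) ≤ 8 * P ^ ((2:ℝ) / 3) := by
      have := Real.rpow_le_rpow (by norm_num) hP54.le (by norm_num : (0:ℝ) ≤ 2 / 3)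
      linarith [Real.self_le_rpow_of_le_one (x := (0.54:ℝ)) (y := 2 / 3) (by norm_num)
        (by norm_num) (by norm_num)]
    rw [abs_le]
    constructor <;> linarith [hy.1, hy.2]

end Inversion

section Counting

open Set

variable {N : ℕ} {A : Matrix (Fin N) (Fin N) ℂ} (hA : A.IsHermitian)

lemma countFn_nonneg (E : ℝ) : 0 ≤ countFn hA E := by
  unfold countFn
  positivity

lemma countFn_le_one (E : ℝ) : countFn hA E ≤ 1 := by
  refine inv_mul_le_one_of_le₀ ?_ (Nat.cast_nonneg N)
  exact_mod_cast (Finset.card_filter_le _ _).trans (Finset.card_univ.trans (Fintype.card_fin N)).le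

lemma abs_countFn_sub_nSc_le_iSup (E : ℝ) :
    |countFn hA E - nSc E| ≤ ⨆ E' : ℝ, |countFn hA E' - nSc E'| := by
  refine le_ciSup (f := fun E' => |countFn hA E' - nSc E'|) ⟨1, ?_⟩ E
  rintro _ ⟨E', rfl⟩
  rw [abs_le]
  constructor <;> linarith [countFn_nonneg hA E', countFn_le_one hA E', nSc_nonneg E',
    nSc_le_one E']

lemma abs_sortedEigs_le_hermOpNorm (α : Fin N) : |sortedEigs hA α| ≤ hermOpNorm hA :=
  le_ciSup (f := fun i => |hA.eigenvalues i|) (finite_range _).bddAbove _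

lemma succ_div_le_countFn_sortedEigs (α : Fin N) :
    ((α : ℕ) + 1 : ℝ) / N ≤ countFn hA (sortedEigs hA α) := by
  have hcard : (α : ℕ) + 1 ≤ (Finset.univ.filter
      fun i => hA.eigenvalues i ≤ sortedEigs hA α).card := by
    rw [← Fin.card_Iic]
    refine Finset.card_le_card_of_injOn (Tuple.sort hA.eigenvalues) (fun β hβ => ?_)
      (Tuple.sort hA.eigenvalues).injective.injOn
    simp only [Finset.coe_filter, Finset.mem_univ, true_and, mem_ofPred_eq]
    exact Tuple.monotone_sort hA.eigenvalues (Finset.mem_Iic.mp hβ)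
  rw [countFn, inv_mul_eq_div]
  exact div_le_div_of_nonneg_right (by exact_mod_cast hcard) (Nat.cast_nonneg N)

lemma countFn_le_div_of_lt_sortedEigs (α : Fin N) {E : ℝ} (hE : E < sortedEigs hA α) :
    countFn hA E ≤ (α : ℕ) / N := by
  have hcard : (Finset.univ.filter fun i => hA.eigenvalues i ≤ E).card ≤ (α : ℕ) := by
    rw [← Fin.card_Iio]
    refine Finset.card_le_card_of_injOn (Tuple.sort hA.eigenvalues).symm (fun i hi => ?_)
      (Tuple.sort hA.eigenvalues).symm.injective.injOn
    simp only [Finset.coe_filter, Finset.mem_univ, true_and, mem_ofPred_eq] at hi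
    simp only [Finset.coe_Iio, mem_Iio]
    by_contra! hle
    have := Tuple.monotone_sort hA.eigenvalues hle
    simp only [Function.comp_apply, Equiv.apply_symm_apply] at this
    exact absurd (hi.trans_lt hE) (not_lt.mpr this)
  rw [countFn, inv_mul_eq_div]
  exact div_le_div_of_nonneg_right (by exact_mod_cast hcard) (Nat.cast_nonneg N)

lemma nSc_sortedEigs_mem_Icc {Z : ℝ} (hdev : ∀ E, |countFn hA E - nSc E| ≤ Z) (α : Fin N) :
    nSc (sortedEigs hA α) ∈ Icc (((α : ℕ) + 1 : ℝ) / N - Z) ((α : ℕ) / N + Z) := by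
  refine ⟨by linarith [succ_div_le_countFn_sortedEigs hA α, (abs_le.mp (hdev (sortedEigs hA α))).2],
    ?_⟩
  have hclosed : IsClosed {E | nSc E ≤ (α : ℕ) / N + Z} :=
    isClosed_le continuous_nSc continuous_const
  have hIic : sortedEigs hA α ∈ closure (Iio (sortedEigs hA α)) := by
    rw [closure_Iio]
    exact self_mem_Iic
  refine hclosed.closure_subset_iff.mpr (fun E hE => show nSc E ≤ _ from ?_) hIic
  linarith [countFn_le_div_of_lt_sortedEigs hA α hE, (abs_le.mp (hdev E)).1]

lemma one_div_le_two_mul_of_abs_countFn_sub_nSc_le {Z : ℝ}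
    (hdev : ∀ E, |countFn hA E - nSc E| ≤ Z) (hN : 0 < N) : 1 / (N : ℝ) ≤ 2 * Z := by
  have h := nSc_sortedEigs_mem_Icc hA hdev ⟨0, hN⟩
  simp only [Nat.cast_zero, zero_add, zero_div] at h
  linarith [h.1.trans h.2]

end Counting

section Rigidity

open Set Real

lemma nSc_gammaLoc {N k : ℕ} (hk : 0 < k) (hkN : k ≤ N) :
    nSc (gammaLoc N k) = k / N ∧ gammaLoc N k ∈ Icc (-2) 2 := by
  have hN : (0:ℝ) < N := by exact_mod_cast hk.trans_le hkN
  set a : ℝ := k / N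
  have ha0 : 0 < a := div_pos (by exact_mod_cast hk) hN
  have ha1 : a ≤ 1 := (div_le_one hN).mpr (by exact_mod_cast hkN)
  have hlb : ∀ x ∈ {x | a ≤ nSc x}, -2 ≤ x := fun x hx =>
    (neg_two_lt_of_nSc_pos (ha0.trans_le hx)).le
  have h2 : a ≤ nSc 2 := nSc_two ▸ ha1
  obtain ⟨x, hx, hxa⟩ : a ∈ nSc '' Icc (-2) 2 :=
    intermediate_value_Icc (by norm_num) continuous_nSc.continuousOn
      ⟨(nSc_eq_zero_of_le le_rfl).symm ▸ ha0.le, h2⟩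
  have hmem : gammaLoc N k ∈ {x | a ≤ nSc x} :=
    (isClosed_le continuous_const continuous_nSc).csInf_mem ⟨2, h2⟩ ⟨-2, hlb⟩
  have hle : gammaLoc N k ≤ x := csInf_le ⟨-2, hlb⟩ hxa.ge
  exact ⟨le_antisymm (hxa ▸ nSc_mono hle) hmem, hlb _ hmem, hle.trans hx.2⟩

/-- The paper's `α̂ = min(α, N + 1 - α)`, for the `0`-based index `α`. -/
def alphaHat {N : ℕ} (α : Fin N) : ℕ := min (α.val + 1) (N - α.val)

lemma min_nSc_gammaLoc_mem_Icc {N : ℕ} (α : Fin N) :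
    min (nSc (gammaLoc N (α.val + 1))) (1 - nSc (gammaLoc N (α.val + 1))) ∈
      Icc (((alphaHat α : ℝ) - 1) / N) ((alphaHat α : ℝ) / N) := by
  have hN : (0:ℝ) < N := by exact_mod_cast α.pos
  have hγ := (nSc_gammaLoc α.val.succ_pos α.isLt).1
  set u : ℝ := ((α.val + 1 : ℕ) : ℝ)
  set v : ℝ := ((N - α.val : ℕ) : ℝ)
  have hcompl : 1 - u / N = (v - 1) / N := by
    rw [show v = N - α.val from Nat.cast_sub α.isLt.le, show u = α.val + 1 by push_cast [u]; rfl]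
    field_simp
    ring
  have hÂ : (alphaHat α : ℝ) = min u v := Nat.cast_min _ _
  rw [hγ, hcompl, min_div_div_right hN.le, hÂ]
  exact ⟨div_le_div_of_nonneg_right
      (le_min (by linarith [min_le_left u v]) (by linarith [min_le_right u v])) hN.le,
    div_le_div_of_nonneg_right (min_le_min_left _ (by linarith)) hN.le⟩

variable {N : ℕ} {A : Matrix (Fin N) (Fin N) ℂ} (hA : A.IsHermitian)

lemma abs_nSc_sortedEigs_sub_nSc_gammaLoc_le {Z : ℝ}
    (hdev : ∀ E, |countFn hA E - nSc E| ≤ Z) (α : Fin N) :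
    |nSc (sortedEigs hA α) - nSc (gammaLoc N (α.val + 1))| ≤ Z + 1 / N := by
  obtain ⟨hlo, hhi⟩ := nSc_sortedEigs_mem_Icc hA hdev α
  rw [(nSc_gammaLoc α.val.succ_pos α.isLt).1, abs_le]
  push_cast
  rw [add_div] at hlo ⊢
  have : 0 ≤ 1 / (N : ℝ) := by positivity
  constructor <;> linarith

lemma abs_sortedEigs_sub_gammaLoc_le_bulk {Z : ℝ} (hdev : ∀ E, |countFn hA E - nSc E| ≤ Z)
    (α : Fin N) (hα : 240 * (N * Z) ≤ alphaHat α) :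
    |sortedEigs hA α - gammaLoc N (α.val + 1)| ≤ 42 * Z * (N / alphaHat α) ^ ((1:ℝ) / 3) := by
  set d := |sortedEigs hA α - gammaLoc N (α.val + 1)|
  set Â : ℝ := ((alphaHat α : ℕ) : ℝ)
  set a := min (nSc (gammaLoc N (α.val + 1))) (1 - nSc (gammaLoc N (α.val + 1)))
  have hN : (0:ℝ) < N := by exact_mod_cast α.pos
  have hZ := one_div_le_two_mul_of_abs_countFn_sub_nSc_le hA hdev α.pos
  have hNZ : 1 ≤ 2 * (N * Z) := by
    rw [div_le_iff₀ hN] at hZ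
    linarith
  have hÂa : Â - 1 ≤ a * N := (div_le_iff₀ hN).mp (min_nSc_gammaLoc_mem_Icc α).1
  have ha : 0 < a := pos_of_mul_pos_left (by linarith) hN.le
  have h20 : 20 * (Z + 1 / N) ≤ a := by
    have : 20 * (Z + 1 / N) * N = 20 * (N * Z) + 20 := by field_simp
    rw [← mul_le_mul_iff_of_pos_right hN, this]
    linarith
  have key : d * a ^ ((1:ℝ) / 3) ≤ 7 * (Z + 1 / N) :=
    abs_sub_mul_min_nSc_rpow_le ha h20 (abs_nSc_sortedEigs_sub_nSc_gammaLoc_le hA hdev α)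
  have hÂN : 0 < (Â / N) ^ ((1:ℝ) / 3) := rpow_pos_of_pos (div_pos (by linarith) hN) _
  have hÂ_le : (Â / N) ^ ((1:ℝ) / 3) ≤ 2 * a ^ ((1:ℝ) / 3) :=
    calc (Â / N) ^ ((1:ℝ) / 3) ≤ (2 * a) ^ ((1:ℝ) / 3) := by
          refine rpow_le_rpow (div_nonneg (by linarith) hN.le) ?_ (by norm_num)
          rw [div_le_iff₀ hN]
          linarith
      _ = 2 ^ ((1:ℝ) / 3) * a ^ ((1:ℝ) / 3) := mul_rpow (by norm_num) ha.le
      _ ≤ 2 * a ^ ((1:ℝ) / 3) := mul_le_mul_of_nonneg_right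
          (rpow_le_self_of_one_le (by norm_num) (by norm_num)) (by positivity)
  calc d = d * (Â / N) ^ ((1:ℝ) / 3) / (Â / N) ^ ((1:ℝ) / 3) :=
        (mul_div_cancel_right₀ _ hÂN.ne').symm
    _ ≤ 2 * (d * a ^ ((1:ℝ) / 3)) / (Â / N) ^ ((1:ℝ) / 3) := by
        refine div_le_div_of_nonneg_right ?_ hÂN.le
        nlinarith [abs_nonneg (sortedEigs hA α - gammaLoc N (α.val + 1))]
    _ ≤ 42 * Z / (Â / N) ^ ((1:ℝ) / 3) := div_le_div_of_nonneg_right (by linarith) hÂN.le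
    _ = 42 * Z * (N / Â) ^ ((1:ℝ) / 3) := by
        rw [div_eq_mul_inv, ← inv_rpow (div_nonneg (by linarith) hN.le), inv_div]

lemma abs_sortedEigs_sub_gammaLoc_le_edge {Z W : ℝ} (hdev : ∀ E, |countFn hA E - nSc E| ≤ Z)
    (hnorm : max (hermOpNorm hA - 2) 0 ≤ W) (α : Fin N) :
    |sortedEigs hA α - gammaLoc N (α.val + 1)|
      ≤ W + 8 * ((alphaHat α : ℝ) / N + 3 * Z) ^ ((2:ℝ) / 3) := by
  have hZ := one_div_le_two_mul_of_abs_countFn_sub_nSc_le hA hdev α.pos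
  refine abs_sub_le_of_min_nSc_add_abs_le ((le_max_right _ _).trans hnorm)
    ((abs_sortedEigs_le_hermOpNorm hA α).trans (by linarith [le_max_left (hermOpNorm hA - 2) 0]))
    (nSc_gammaLoc α.val.succ_pos α.isLt).2 ?_
  linarith [(min_nSc_gammaLoc_mem_Icc α).2, abs_nSc_sortedEigs_sub_nSc_gammaLoc_le hA hdev α]

end Rigidity

section GoodEvent

open Real

variable {N : ℕ} {A : Matrix (Fin N) (Fin N) ℂ} (hA : A.IsHermitian)

lemma abs_sortedEigs_sub_gammaLoc_le_of_iSup_le_bulk {b m c Y : ℝ} (α : Fin N) (hb : 240 ≤ b)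
    (hbm : b ^ 2 ≤ m) (hbc : b ^ 2 ≤ c) (hα : m * (N * Y) ≤ alphaHat α)
    (hdev : ⨆ E : ℝ, |countFn hA E - nSc E| ≤ b * Y) :
    |sortedEigs hA α - gammaLoc N (α.val + 1)|
      ≤ c * (Y * (N / alphaHat α) ^ ((1:ℝ) / 3)) := by
  have hdev' E := (abs_countFn_sub_nSc_le_iSup hA E).trans hdev
  have hY : 0 ≤ Y := nonneg_of_mul_nonneg_right ((abs_nonneg _).trans (hdev' 0)) (by linarith)
  have hNY : 0 ≤ (N : ℝ) * Y := by positivity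
  have hα' : 240 * (N * (b * Y)) ≤ alphaHat α :=
    calc 240 * (N * (b * Y)) = 240 * b * (N * Y) := by ring
      _ ≤ m * (N * Y) := mul_le_mul_of_nonneg_right (by nlinarith) hNY
      _ ≤ alphaHat α := hα
  calc |sortedEigs hA α - gammaLoc N (α.val + 1)|
      ≤ 42 * (b * Y) * (N / alphaHat α) ^ ((1:ℝ) / 3) :=
        abs_sortedEigs_sub_gammaLoc_le_bulk hA hdev' α hα'
    _ = 42 * b * (Y * (N / alphaHat α) ^ ((1:ℝ) / 3)) := by ring
    _ ≤ c * (Y * (N / alphaHat α) ^ ((1:ℝ) / 3)) :=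
        mul_le_mul_of_nonneg_right (by nlinarith) (by positivity)

lemma abs_sortedEigs_sub_gammaLoc_le_of_iSup_le_edge {b m c X Y : ℝ} (α : Fin N) (hb : 32 ≤ b)
    (hm : 1 ≤ m) (hbc : b ^ 2 ≤ c) (hα : (alphaHat α : ℝ) ≤ m * (N * Y))
    (hdev : ⨆ E : ℝ, |countFn hA E - nSc E| ≤ b * Y)
    (hnorm : max (hermOpNorm hA - 2) 0 ≤ b * X) :
    |sortedEigs hA α - gammaLoc N (α.val + 1)| ≤ c * (X + (m * Y) ^ ((2:ℝ) / 3)) := by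
  have hdev' E := (abs_countFn_sub_nSc_le_iSup hA E).trans hdev
  have hY : 0 ≤ Y := nonneg_of_mul_nonneg_right ((abs_nonneg _).trans (hdev' 0)) (by linarith)
  have hX : 0 ≤ X := nonneg_of_mul_nonneg_right ((le_max_right _ _).trans hnorm) (by linarith)
  have hN : (0:ℝ) < N := by exact_mod_cast α.pos
  have hmY : 0 ≤ m * Y := by positivity
  have hP : (alphaHat α : ℝ) / N + 3 * (b * Y) ≤ 4 * b * (m * Y) := by
    have : (alphaHat α : ℝ) / N ≤ m * Y := by
      rw [div_le_iff₀ hN]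
      linarith
    have h1 : m * Y ≤ b * (m * Y) := le_mul_of_one_le_left hmY (by linarith)
    have h2 : b * Y ≤ b * (m * Y) :=
      mul_le_mul_of_nonneg_left (le_mul_of_one_le_left hY hm) (by linarith)
    linarith
  have hP' : ((alphaHat α : ℝ) / N + 3 * (b * Y)) ^ ((2:ℝ) / 3) ≤ 4 * b * (m * Y) ^ ((2:ℝ) / 3) :=
    calc ((alphaHat α : ℝ) / N + 3 * (b * Y)) ^ ((2:ℝ) / 3)
        ≤ (4 * b * (m * Y)) ^ ((2:ℝ) / 3) := rpow_le_rpow (by positivity) hP (by norm_num)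
      _ = (4 * b) ^ ((2:ℝ) / 3) * (m * Y) ^ ((2:ℝ) / 3) := mul_rpow (by positivity) hmY
      _ ≤ 4 * b * (m * Y) ^ ((2:ℝ) / 3) := mul_le_mul_of_nonneg_right
          (rpow_le_self_of_one_le (by linarith) (by norm_num)) (by positivity)
  have hbX : b * X ≤ c * X := mul_le_mul_of_nonneg_right (by nlinarith) hX
  have hbq : 32 * b * (m * Y) ^ ((2:ℝ) / 3) ≤ c * (m * Y) ^ ((2:ℝ) / 3) :=
    mul_le_mul_of_nonneg_right (by nlinarith) (by positivity)
  calc |sortedEigs hA α - gammaLoc N (α.val + 1)|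
      ≤ b * X + 8 * ((alphaHat α : ℝ) / N + 3 * (b * Y)) ^ ((2:ℝ) / 3) :=
        abs_sortedEigs_sub_gammaLoc_le_edge hA hdev' hnorm α
    _ ≤ c * (X + (m * Y) ^ ((2:ℝ) / 3)) := by linarith

end GoodEvent

section StochasticDomination

open Filter

lemma ofReal_rpow_neg_add_one_add_self_le {x : ℝ} (hx : 2 ≤ x) (D : ℝ) :
    ENNReal.ofReal (x ^ (-(D + 1))) + ENNReal.ofReal (x ^ (-(D + 1)))
      ≤ ENNReal.ofReal (x ^ (-D)) := by
  have hx0 : 0 < x := by linarith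
  rw [← ENNReal.ofReal_add (by positivity) (by positivity)]
  refine ENNReal.ofReal_le_ofReal ?_
  rw [show -(D + 1) = -D + -1 by ring, Real.rpow_add hx0, Real.rpow_neg_one]
  have : x⁻¹ ≤ 1 / 2 := by rw [inv_le_comm₀ hx0 (by norm_num)]; linarith
  nlinarith [Real.rpow_pos_of_pos hx0 (-D)]

lemma StochDom.of_eventually_imp {Ω : ℕ → Type} [∀ N, MeasurableSpace (Ω N)]
    {P : ∀ N, Measure (Ω N)} {U : ℕ → Type} {T : ∀ N, Set (U N)} {X Y : ∀ N, U N → Ω N → ℝ}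
    {X₁ Y₁ X₂ Y₂ : ∀ N, Unit → Ω N → ℝ}
    (h₁ : StochDom P (fun _ => Set.univ) X₁ Y₁) (h₂ : StochDom P (fun _ => Set.univ) X₂ Y₂)
    (himp : ∀ ε > (0:ℝ), ∃ ε' > (0:ℝ), ∀ᶠ N : ℕ in atTop, ∀ u ∈ T N, ∀ ω,
      X₁ N () ω ≤ (N : ℝ) ^ ε' * Y₁ N () ω → X₂ N () ω ≤ (N : ℝ) ^ ε' * Y₂ N () ω →
        X N u ω ≤ (N : ℝ) ^ ε * Y N u ω) :
    StochDom P T X Y := by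
  intro ε hε D hD
  obtain ⟨ε', hε', himp⟩ := himp ε hε
  obtain ⟨N₁, hN₁⟩ := h₁ ε' hε' (D + 1) (by linarith)
  obtain ⟨N₂, hN₂⟩ := h₂ ε' hε' (D + 1) (by linarith)
  obtain ⟨N₃, hN₃⟩ := eventually_atTop.mp himp
  refine ⟨max (max N₁ N₂) (max N₃ 2), fun N hN u hu => ?_⟩
  simp only [max_le_iff] at hN
  have hsub : {ω | (N : ℝ) ^ ε * Y N u ω < X N u ω} ⊆
      {ω | (N : ℝ) ^ ε' * Y₁ N () ω < X₁ N () ω} ∪ {ω | (N : ℝ) ^ ε' * Y₂ N () ω < X₂ N () ω} := by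
    intro ω hω
    by_contra hgood
    simp only [Set.mem_union, Set.mem_ofPred_eq, not_or, not_lt] at hgood hω
    exact hω.not_ge (hN₃ N hN.2.1 u hu ω hgood.1 hgood.2)
  calc P N {ω | (N : ℝ) ^ ε * Y N u ω < X N u ω}
      ≤ P N {ω | (N : ℝ) ^ ε' * Y₁ N () ω < X₁ N () ω}
        + P N {ω | (N : ℝ) ^ ε' * Y₂ N () ω < X₂ N () ω} :=
        (measure_mono hsub).trans (measure_union_le _ _)
    _ ≤ ENNReal.ofReal ((N : ℝ) ^ (-(D + 1))) + ENNReal.ofReal ((N : ℝ) ^ (-(D + 1))) :=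
        add_le_add (hN₁ N hN.1.1 () trivial) (hN₂ N hN.1.2 () trivial)
    _ ≤ ENNReal.ofReal ((N : ℝ) ^ (-D)) :=
        ofReal_rpow_neg_add_one_add_self_le (by exact_mod_cast hN.2.2) D

lemma exists_pos_eventually_rpow_ge {ε₁ κ : ℝ} (hε₁ : 0 < ε₁) (hκ : 0 < κ) (C : ℝ) :
    ∃ β > (0:ℝ), ∀ᶠ N : ℕ in atTop, C ≤ (N : ℝ) ^ β ∧
      ((N : ℝ) ^ β) ^ 2 ≤ (N : ℝ) ^ ε₁ ∧ ((N : ℝ) ^ β) ^ 2 ≤ (N : ℝ) ^ κ := by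
  set β := min ε₁ κ / 2
  have hβ : 0 < β := by positivity
  refine ⟨β, hβ, ?_⟩
  filter_upwards [((tendsto_rpow_atTop hβ).comp tendsto_natCast_atTop_atTop).eventually_ge_atTop C,
    eventually_ge_atTop 1] with N hC hN
  have hN1 : (1:ℝ) ≤ N := by exact_mod_cast hN
  have hsq : ((N : ℝ) ^ β) ^ 2 = (N : ℝ) ^ min ε₁ κ := by
    rw [← Real.rpow_natCast, ← Real.rpow_mul (by positivity)]
    norm_num [β]
  exact ⟨hC, hsq ▸ Real.rpow_le_rpow_of_exponent_le hN1 (min_le_left _ _),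
    hsq ▸ Real.rpow_le_rpow_of_exponent_le hN1 (min_le_right _ _)⟩

end StochasticDomination

theorem eigenvalue_rigidity_general
    (E : MatrixEnsemble) (δ : ℝ) (μmom : ℕ → ℝ) (hE : IsWignerType E δ μmom)
    (X Y : ℕ → ℝ)
    (hnorm : StochDom E.P (fun _ => (Set.univ : Set Unit))
      (fun N _ ω => max (hermOpNorm (hE.hermitian N ω) - 2) 0)
      (fun N _ _ => X N))
    (hcount : StochDom E.P (fun _ => (Set.univ : Set Unit))
      (fun N _ ω => ⨆ Ee : ℝ, |countFn (hE.hermitian N ω) Ee - nSc Ee|)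
      (fun N _ _ => Y N))
    (ε : ℝ) (hε : 0 < ε) :
    StochDom E.P
      (fun N => { α : Fin N |
        Mpar E N ^ ε * ((N : ℝ) * Y N) ≤ (min (α.val + 1) (N - α.val) : ℕ) })
      (fun N α ω => |sortedEigs (hE.hermitian N ω) α - gammaLoc N (α.val + 1)|)
      (fun N α _ => Y N * ((N : ℝ) / (min (α.val + 1) (N - α.val) : ℕ)) ^ ((1:ℝ)/3))
    ∧ StochDom E.P
      (fun N => { α : Fin N |
        ((min (α.val + 1) (N - α.val) : ℕ) : ℝ) ≤ Mpar E N ^ ε * ((N : ℝ) * Y N) })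
      (fun N α ω => |sortedEigs (hE.hermitian N ω) α - gammaLoc N (α.val + 1)|)
      (fun N α _ => X N + (Mpar E N ^ ε * Y N) ^ ((2:ℝ)/3)) := by
  have hM (N : ℕ) : (N : ℝ) ^ (ε * δ) ≤ Mpar E N ^ ε := by
    rw [mul_comm, Real.rpow_mul (Nat.cast_nonneg N)]
    exact Real.rpow_le_rpow (by positivity) (hE.M_lower N) hε.le
  constructor
  all_goals
    refine StochDom.of_eventually_imp hcount hnorm fun ε₁ hε₁ => ?_
    obtain ⟨β, hβ, hev⟩ := exists_pos_eventually_rpow_ge hε₁ (mul_pos hε hE.δ_pos) 240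
    refine ⟨β, hβ, ?_⟩
    filter_upwards [hev, Filter.eventually_ge_atTop 1] with N ⟨hb, hbε₁, hbM⟩ hN α hα ω hdev hop
  · exact abs_sortedEigs_sub_gammaLoc_le_of_iSup_le_bulk (hE.hermitian N ω) α hb
      (hbM.trans (hM N)) hbε₁ hα hdev
  · have hM1 : 1 ≤ Mpar E N ^ ε :=
      (Real.one_le_rpow (by exact_mod_cast hN) (mul_pos hε hE.δ_pos).le).trans (hM N)
    exact abs_sortedEigs_sub_gammaLoc_le_of_iSup_le_edge (hE.hermitian N ω) α (by linarith)
      hM1 hbε₁ hα hdev hop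

/-- **Eigenvalue locations / rigidity** (Theorem 7.5). Suppose `δ_- ≥ c`, and that
`‖H‖ ≤ 2 + O_≺(X)` and `sup_E |𝔫_N(E) - n(E)| = O_≺(Y)` hold for deterministic
control parameters `X, Y ≤ C`. With `α̂ = min(α, N+1-α)` (here `α` is `1`-based) and
`ε > 0` fixed: `|λ_α - γ_α| ≺ Y (N/α̂)^{1/3}` uniformly over `α` with `α̂ ≥ M^ε N Y`,
and `|λ_α - γ_α| ≺ X + (M^ε Y)^{2/3}` uniformly over `α` with `α̂ ≤ M^ε N Y`. -/
theorem eigenvalue_rigidity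
    (E : MatrixEnsemble) (δ : ℝ) (μmom : ℕ → ℝ) (hE : IsWignerType E δ μmom)
    (c C : ℝ) (hc : 0 < c)
    (hδminus : ∀ N, c ≤ deltaMinus (sMat E N))
    (X Y : ℕ → ℝ) (hXC : ∀ N, X N ≤ C) (hYC : ∀ N, Y N ≤ C)
    (hnorm : StochDom E.P (fun _ => (Set.univ : Set Unit))
      (fun N _ ω => max (hermOpNorm (hE.hermitian N ω) - 2) 0)
      (fun N _ _ => X N))
    (hcount : StochDom E.P (fun _ => (Set.univ : Set Unit))
      (fun N _ ω => ⨆ Ee : ℝ, |countFn (hE.hermitian N ω) Ee - nSc Ee|)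
      (fun N _ _ => Y N))
    (ε : ℝ) (hε : 0 < ε) :
    StochDom E.P
      (fun N => { α : Fin N |
        Mpar E N ^ ε * ((N : ℝ) * Y N) ≤ (min (α.val + 1) (N - α.val) : ℕ) })
      (fun N α ω => |sortedEigs (hE.hermitian N ω) α - gammaLoc N (α.val + 1)|)
      (fun N α _ => Y N * ((N : ℝ) / (min (α.val + 1) (N - α.val) : ℕ)) ^ ((1:ℝ)/3))
    ∧ StochDom E.P
      (fun N => { α : Fin N |
        ((min (α.val + 1) (N - α.val) : ℕ) : ℝ) ≤ Mpar E N ^ ε * ((N : ℝ) * Y N) })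
      (fun N α ω => |sortedEigs (hE.hermitian N ω) α - gammaLoc N (α.val + 1)|)
      (fun N α _ => X N + (Mpar E N ^ ε * Y N) ^ ((2:ℝ)/3)) :=
  eigenvalue_rigidity_general E δ μmom hE X Y hnorm hcount ε hε
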